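/- arXiv:1610.07739 — 3 statements merged into one kernel-verified Lean document; each statement's English description precedes it below -/
import Mathlib

section
/- For the shearlet-type group H = { [[a^λ, t₁, t₂],[0, a^{λ−c}, 0],[0, 0, a^{λ−1}]] : a > 0, t₁, t₂ ∈ ℝ } acting on ℝ³ by the transpose action h·ξ = (hᵀ)⁻¹ξ, the orbits of the points (±1, 0, 0) are the open half-spaces {ξ ∈ ℝ³ : ±ξ₁ > 0}. -/
/-!
Solving `(Mᵀ)⁻¹ (s, 0, 0) = ξ` amounts to `Mᵀ ξ = (s, 0, 0)`, i.e. `a ^ λ ξ₀ = s` together with two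
linear equations that the shears `t₁, t₂` can always satisfy once `ξ₀ ≠ 0`. Since `a ↦ a ^ λ` maps
`(0, ∞)` onto itself for `λ ≠ 0`, the orbit of `(s, 0, 0)` is exactly `{ξ | 0 < s ξ₀}`.
-/

open Matrix

/-- The shearlet-type group of case (2.e), as a set of matrices. -/
noncomputable def shearletSet (lam c : ℝ) : Set (Matrix (Fin 3) (Fin 3) ℝ) :=
  {M | ∃ a t₁ t₂ : ℝ, 0 < a ∧
    M = !![a ^ lam, t₁, t₂;
           0, a ^ (lam - c), 0;
           0, 0, a ^ (lam - 1)]}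

theorem Matrix.inv_mulVec_eq_iff {n α : Type*} [Fintype n] [DecidableEq n] [CommRing α]
    {A : Matrix n n α} (hA : IsUnit A.det) {u v : n → α} :
    A⁻¹ *ᵥ u = v ↔ A *ᵥ v = u := by
  constructor
  · rintro rfl
    rw [mulVec_mulVec, mul_nonsing_inv A hA, one_mulVec]
  · rintro rfl
    rw [mulVec_mulVec, nonsing_inv_mul A hA, one_mulVec]

section FirstRowShear

variable {K : Type*} [Field K] {p q r : K} (t₁ t₂ : K)

theorem transpose_firstRowShear_mulVec (ξ : Fin 3 → K) :
    (!![p, t₁, t₂; 0, q, 0; 0, 0, r] : Matrix (Fin 3) (Fin 3) K)ᵀ *ᵥ ξ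
      = ![p * ξ 0, t₁ * ξ 0 + q * ξ 1, t₂ * ξ 0 + r * ξ 2] := by
  ext i
  fin_cases i <;> simp [mulVec, dotProduct, Fin.sum_univ_three]

theorem inv_transpose_firstRowShear_mulVec_eq_iff (hp : p ≠ 0) (hq : q ≠ 0) (hr : r ≠ 0)
    (s : K) (ξ : Fin 3 → K) :
    ((!![p, t₁, t₂; 0, q, 0; 0, 0, r] : Matrix (Fin 3) (Fin 3) K)ᵀ)⁻¹ *ᵥ ![s, 0, 0] = ξ ↔
      p * ξ 0 = s ∧ t₁ * ξ 0 + q * ξ 1 = 0 ∧ t₂ * ξ 0 + r * ξ 2 = 0 := by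
  rw [inv_mulVec_eq_iff (by simp [det_fin_three, hp, hq, hr]), transpose_firstRowShear_mulVec]
  simp [funext_iff, Fin.forall_fin_succ]

end FirstRowShear

theorem mem_shearlet_orbit_iff {lam : ℝ} (hlam : lam ≠ 0) (c : ℝ) {s : ℝ} (hs : s ≠ 0)
    (ξ : Fin 3 → ℝ) :
    (∃ M ∈ shearletSet lam c, (Mᵀ)⁻¹ *ᵥ ![s, 0, 0] = ξ) ↔ 0 < s * ξ 0 := by
  have hpow {a : ℝ} (ha : 0 < a) (e : ℝ) : a ^ e ≠ 0 := (Real.rpow_pos_of_pos ha e).ne'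
  simp only [shearletSet, Set.mem_ofPred_eq]
  constructor
  · rintro ⟨_, ⟨a, t₁, t₂, ha, rfl⟩, hM⟩
    rw [inv_transpose_firstRowShear_mulVec_eq_iff _ _ (hpow ha _) (hpow ha _) (hpow ha _)] at hM
    obtain ⟨rfl, -, -⟩ := hM
    rw [mul_assoc]
    exact mul_pos (Real.rpow_pos_of_pos ha lam) (mul_self_pos.2 (right_ne_zero_of_mul hs))
  · intro hsξ
    have hξ : ξ 0 ≠ 0 := right_ne_zero_of_mul hsξ.ne'
    have hratio : 0 < s / ξ 0 := by
      rw [← mul_div_mul_right s (ξ 0) hξ]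
      exact div_pos hsξ (mul_self_pos.2 hξ)
    set a := (s / ξ 0) ^ lam⁻¹
    have ha : 0 < a := Real.rpow_pos_of_pos hratio _
    have ha_lam : a ^ lam = s / ξ 0 := Real.rpow_inv_rpow hratio.le hlam
    refine ⟨_, ⟨a, -(a ^ (lam - c) * ξ 1) / ξ 0, -(a ^ (lam - 1) * ξ 2) / ξ 0, ha, rfl⟩, ?_⟩
    rw [inv_transpose_firstRowShear_mulVec_eq_iff _ _ (hpow ha _) (hpow ha _) (hpow ha _), ha_lam]
    refine ⟨?_, ?_, ?_⟩ <;> field_simp <;> ring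

/-- For the shearlet-type group acting on `ℝ³` by the transpose action
`h · ξ = (hᵀ)⁻¹ ξ`, the orbits of `(±1,0,0)` are the open half-spaces `{±ξ₁ > 0}`. -/
theorem shearlet_orbits (lam c : ℝ) (hlam : lam ≠ 0) :
    ({ξ : Fin 3 → ℝ | ∃ M ∈ shearletSet lam c, (Mᵀ)⁻¹ *ᵥ ![1, 0, 0] = ξ}
        = {ξ : Fin 3 → ℝ | 0 < ξ 0}) ∧
    ({ξ : Fin 3 → ℝ | ∃ M ∈ shearletSet lam c, (Mᵀ)⁻¹ *ᵥ ![-1, 0, 0] = ξ}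
        = {ξ : Fin 3 → ℝ | ξ 0 < 0}) := by
  constructor <;> ext ξ
  · simpa using mem_shearlet_orbit_iff hlam c one_ne_zero ξ
  · simpa using mem_shearlet_orbit_iff hlam c (neg_ne_zero.2 one_ne_zero) ξ
end

section
/- Let 𝒪 ⊂ ℝ^d be open with ℝ⁺·𝒪ᶜ ⊆ 𝒪ᶜ (the complement is a cone). For ξ ∈ 𝒪, let η ∈ 𝒪ᶜ realize dist(ξ, 𝒪ᶜ). Then ⟨η, ξ − η⟩ = 0, and consequently A(ξ) := min( dist(ξ,𝒪ᶜ)/(1 + √(|ξ|² − dist(ξ,𝒪ᶜ)²)), 1/(1+|ξ|) ) equals min( |ξ−η|/(1+|η|), 1/(1+|ξ|) ). -/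
open Metric

/-- Let `𝒪 ⊆ ℝ^d` be open with conic complement, `ξ ∈ 𝒪` and `η ∈ 𝒪ᶜ` a closest
point of `𝒪ᶜ` to `ξ`.  Then `⟨η, ξ-η⟩ = 0`, and the envelope
`A(ξ) = min(dist(ξ,𝒪ᶜ)/(1+√(|ξ|²−dist(ξ,𝒪ᶜ)²)), 1/(1+|ξ|))` equals
`min(|ξ−η|/(1+|η|), 1/(1+|ξ|))`. -/
theorem envelope_closest_point
    (d : ℕ) (𝒪 : Set (EuclideanSpace ℝ (Fin d)))
    (hopen : IsOpen 𝒪) (hne : 𝒪ᶜ.Nonempty)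
    (hcone : ∀ c : ℝ, 0 < c → ∀ x ∈ 𝒪ᶜ, c • x ∈ 𝒪ᶜ)
    (ξ : EuclideanSpace ℝ (Fin d)) (hξ : ξ ∈ 𝒪)
    (η : EuclideanSpace ℝ (Fin d)) (hη : η ∈ 𝒪ᶜ)
    (hmin : dist ξ η = Metric.infDist ξ 𝒪ᶜ) :
    (inner ℝ η (ξ - η) : ℝ) = 0 ∧
    min (Metric.infDist ξ 𝒪ᶜ / (1 + Real.sqrt (‖ξ‖ ^ 2 - Metric.infDist ξ 𝒪ᶜ ^ 2)))
        (1 / (1 + ‖ξ‖))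
      = min (‖ξ - η‖ / (1 + ‖η‖)) (1 / (1 + ‖ξ‖)) := by
  set a : ℝ := inner ℝ η (ξ - η) with ha
  have key : ∀ t : ℝ, -1 < t → 0 ≤ t ^ 2 * ‖η‖ ^ 2 - 2 * t * a := by
    intro t ht
    have hc : (0 : ℝ) < 1 + t := by linarith
    have hmem := hcone (1 + t) hc η hη
    have h1 : dist ξ η ≤ dist ξ ((1 + t) • η) := by
      rw [hmin]; exact Metric.infDist_le_dist_of_mem hmem
    have heq : ξ - (1 + t) • η = (ξ - η) - t • η := by
      rw [add_smul, one_smul]; abel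
    have h2 : ‖ξ - η‖ ≤ ‖(ξ - η) - t • η‖ := by
      simpa [dist_eq_norm, heq] using h1
    have h3 : ‖ξ - η‖ ^ 2 ≤ ‖(ξ - η) - t • η‖ ^ 2 := by
      exact pow_le_pow_left₀ (norm_nonneg _) h2 2
    have hexp : ‖(ξ - η) - t • η‖ ^ 2
        = ‖ξ - η‖ ^ 2 - 2 * (t * a) + t ^ 2 * ‖η‖ ^ 2 := by
      rw [norm_sub_sq_real]
      have h4 : (inner ℝ (ξ - η) (t • η) : ℝ) = t * a := by
        rw [inner_smul_right, real_inner_comm]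
      have h5 : ‖t • η‖ ^ 2 = t ^ 2 * ‖η‖ ^ 2 := by
        simp [norm_smul, mul_pow, sq_abs]
      rw [h4, h5]
    nlinarith [h3, hexp]
  have ha0 : a = 0 := by
    set D : ℝ := ‖η‖ ^ 2 + a ^ 2 + 1 with hD
    have hDpos : (0 : ℝ) < D := by positivity
    have habs : |a| ≤ (a ^ 2 + 1) / 2 := by nlinarith [sq_nonneg (|a| - 1), sq_abs a]
    have ht : -1 < a / D := by
      rw [neg_lt, ← neg_div]
      calc -a / D ≤ |a| / D := by
            gcongr
            exact neg_le_abs a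
      _ < 1 := by
            rw [div_lt_one hDpos]
            calc |a| ≤ (a ^ 2 + 1) / 2 := habs
            _ < D := by nlinarith [sq_nonneg ‖η‖]
    have := key (a / D) ht
    have h6 : (a / D) ^ 2 * ‖η‖ ^ 2 - 2 * (a / D) * a
        = (a ^ 2 * (‖η‖ ^ 2 - 2 * D)) / D ^ 2 := by
      field_simp
    rw [h6] at this
    have h7 : ‖η‖ ^ 2 - 2 * D < 0 := by nlinarith [sq_nonneg a, sq_nonneg ‖η‖]
    have hD2 : (0 : ℝ) < D ^ 2 := by positivity
    have h8 : 0 ≤ a ^ 2 * (‖η‖ ^ 2 - 2 * D) := by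
      have := mul_nonneg this hD2.le
      calc (0:ℝ) ≤ a ^ 2 * (‖η‖ ^ 2 - 2 * D) / D ^ 2 * D ^ 2 := this
      _ = a ^ 2 * (‖η‖ ^ 2 - 2 * D) := by field_simp
    have h9 : a ^ 2 ≤ 0 := by nlinarith [sq_nonneg a]
    have : a ^ 2 = 0 := le_antisymm h9 (sq_nonneg a)
    exact pow_eq_zero_iff two_ne_zero |>.mp this
  refine ⟨ha0, ?_⟩
  have hdist : Metric.infDist ξ 𝒪ᶜ = ‖ξ - η‖ := by
    rw [← hmin, dist_eq_norm]
  have hpyth : ‖ξ‖ ^ 2 = ‖ξ - η‖ ^ 2 + ‖η‖ ^ 2 := by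
    have : ξ = (ξ - η) + η := by abel
    calc ‖ξ‖ ^ 2 = ‖(ξ - η) + η‖ ^ 2 := by rw [← this]
    _ = ‖ξ - η‖ ^ 2 + 2 * inner ℝ (ξ - η) η + ‖η‖ ^ 2 := norm_add_sq_real _ _
    _ = ‖ξ - η‖ ^ 2 + ‖η‖ ^ 2 := by
        rw [real_inner_comm, ← ha, ha0]; ring
  have hsqrt : Real.sqrt (‖ξ‖ ^ 2 - Metric.infDist ξ 𝒪ᶜ ^ 2) = ‖η‖ := by
    rw [hdist, hpyth]
    have : ‖ξ - η‖ ^ 2 + ‖η‖ ^ 2 - ‖ξ - η‖ ^ 2 = ‖η‖ ^ 2 := by ring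
    rw [this, Real.sqrt_sq (norm_nonneg _)]
  rw [hsqrt, hdist]
end

section
/- For the case-(2.l) group with cross-section σ(ξ) = [[|ξ₁|, ξ₂, ξ₃],[0, exp(−ξ₃/ν₁)·|ξ₁|·exp(ν₂|ξ₁| ln|ξ₁|/ν₁), 0],[0,0,|ξ₁|]] defined on ξ₁ ≠ 0, and the envelope A(ξ) = min(|ξ₁|/(1+|(ξ₂,ξ₃)|), 1/(1+|ξ|)), for every e ≥ 0 the quantity A((1,0,ξ₃))^e · ‖σ(1,0,ξ₃)‖ tends to infinity as sign(ν₁)·ξ₃ → −∞; i.e., there is no constant C with A(ξ)^e‖σ(ξ)‖ ≤ C on the orbit. -/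
open Matrix Filter

attribute [local instance] Matrix.normedAddCommGroup

noncomputable section

/-- The cross-section `σ(ξ)` for the case-(2.l) group, defined for `ξ₁ ≠ 0`. -/
def sigmaMat (ν₁ ν₂ ξ₁ ξ₂ ξ₃ : ℝ) : Matrix (Fin 3) (Fin 3) ℝ :=
  !![|ξ₁|, ξ₂, ξ₃;
     0, Real.exp (-ξ₃ / ν₁) * |ξ₁| * Real.exp (ν₂ * |ξ₁| * Real.log |ξ₁| / ν₁), 0;
     0, 0, |ξ₁|]

/-- The envelope function `A(ξ) = min(|ξ₁|/(1+|(ξ₂,ξ₃)|), 1/(1+|ξ|))`. -/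
def envA (ξ₁ ξ₂ ξ₃ : ℝ) : ℝ :=
  min (|ξ₁| / (1 + Real.sqrt (ξ₂ ^ 2 + ξ₃ ^ 2)))
      (1 / (1 + Real.sqrt (ξ₁ ^ 2 + ξ₂ ^ 2 + ξ₃ ^ 2)))

lemma envA_lower (s : ℝ) : 1 / (2 + |s|) ≤ envA 1 0 s := by
  have hs : (0:ℝ) ≤ |s| := abs_nonneg s
  have h1 : Real.sqrt ((0:ℝ) ^ 2 + s ^ 2) = |s| := by
    rw [show (0:ℝ)^2 + s^2 = s^2 by ring, Real.sqrt_sq_eq_abs]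
  have h2 : Real.sqrt ((1:ℝ) ^ 2 + 0 ^ 2 + s ^ 2) ≤ 1 + |s| := by
    rw [show (1:ℝ)^2 + 0^2 + s^2 = 1 + s^2 by ring]
    calc Real.sqrt (1 + s^2) ≤ Real.sqrt ((1+|s|)^2) :=
          Real.sqrt_le_sqrt (by nlinarith [sq_abs s])
      _ = 1 + |s| := Real.sqrt_sq (by positivity)
  unfold envA
  rw [h1, abs_one]
  refine le_min ?_ ?_
  · exact one_div_le_one_div_of_le (by positivity) (by linarith)
  · exact one_div_le_one_div_of_le (by positivity) (by linarith)

/-- For the case-(2.l) cross-section, for every `e ≥ 0` the quantity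
`A((1,0,ξ₃))^e · ‖σ(1,0,ξ₃)‖` tends to infinity as `sign(ν₁)·ξ₃ → -∞`; in particular
there is no constant `C` with `A(ξ)^e ‖σ(ξ)‖ ≤ C` on the orbit `{ξ₁ ≠ 0}`. -/
theorem case2l_envelope_unbounded
    (ν₁ ν₂ : ℝ) (hν₁ : ν₁ ≠ 0) (e : ℝ) (he : 0 ≤ e) :
    Tendsto (fun s : ℝ => envA 1 0 s ^ e * ‖sigmaMat ν₁ ν₂ 1 0 s‖)
        (Filter.comap (fun s : ℝ => Real.sign ν₁ * s) atBot) atTop ∧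
    ¬ ∃ C : ℝ, ∀ ξ₁ ξ₂ ξ₃ : ℝ, ξ₁ ≠ 0 →
        envA ξ₁ ξ₂ ξ₃ ^ e * ‖sigmaMat ν₁ ν₂ ξ₁ ξ₂ ξ₃‖ ≤ C := by
  have hb : (0:ℝ) < |ν₁|⁻¹ := by positivity
  set b := |ν₁|⁻¹ with hbdef
  have hkey : ν₁⁻¹ = Real.sign ν₁ * b := by
    rcases hν₁.lt_or_gt with h | h
    · rw [Real.sign_of_neg h, hbdef, abs_of_neg h]; field_simp
    · rw [Real.sign_of_pos h, hbdef, abs_of_pos h]; ring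
  have hsabs : ∀ s : ℝ, |Real.sign ν₁ * s| = |s| := by
    intro s
    rcases hν₁.lt_or_gt with h | h
    · rw [Real.sign_of_neg h]; rw [abs_mul]; norm_num
    · rw [Real.sign_of_pos h]; norm_num
  -- norm lower bound
  have hnorm : ∀ s : ℝ, Real.exp (-(Real.sign ν₁ * s) * b) ≤ ‖sigmaMat ν₁ ν₂ 1 0 s‖ := by
    intro s
    have hentry : sigmaMat ν₁ ν₂ 1 0 s 1 1 = Real.exp (-s / ν₁) := by
      simp [sigmaMat]
    have h := Matrix.norm_entry_le_entrywise_sup_norm (sigmaMat ν₁ ν₂ 1 0 s) (i := 1) (j := 1)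
    rw [hentry, Real.norm_eq_abs, abs_of_pos (Real.exp_pos _)] at h
    have heq : -s / ν₁ = -(Real.sign ν₁ * s) * b := by
      rw [div_eq_mul_inv, hkey]
      rcases hν₁.lt_or_gt with hc | hc
      · rw [Real.sign_of_neg hc]; ring
      · rw [Real.sign_of_pos hc]; ring
    rw [← heq]; exact h
  set G : ℝ → ℝ := fun u => (1/(2+|u|))^e * Real.exp (-u*b) with hGdef
  have hGF : ∀ s : ℝ, G (Real.sign ν₁ * s) ≤ envA 1 0 s ^ e * ‖sigmaMat ν₁ ν₂ 1 0 s‖ := by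
    intro s
    have h1 : (1/(2+|Real.sign ν₁ * s|))^e ≤ envA 1 0 s ^ e := by
      rw [hsabs s]
      exact Real.rpow_le_rpow (by positivity) (envA_lower s) he
    exact mul_le_mul h1 (hnorm s) (Real.exp_pos _).le
      (Real.rpow_nonneg (le_trans (by positivity) (envA_lower s)) e)
  have hH2 : Tendsto (fun t : ℝ => (1/(2+t))^e * Real.exp (t*b)) atTop atTop := by
    have hH : Tendsto (fun t : ℝ => (3:ℝ)^(-e) * (Real.exp (b*t) / t ^ e)) atTop atTop :=
      (tendsto_exp_mul_div_rpow_atTop e b hb).const_mul_atTop (by positivity)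
    refine tendsto_atTop_mono' _ ?_ hH
    filter_upwards [eventually_ge_atTop (1:ℝ)] with t ht
    have ht0 : (0:ℝ) < t := by linarith
    have h3t : (1/(3*t))^e ≤ (1/(2+t))^e :=
      Real.rpow_le_rpow (by positivity)
        (one_div_le_one_div_of_le (by positivity) (by linarith)) he
    have heq : (3:ℝ)^(-e) * (Real.exp (b*t) / t ^ e) = (1/(3*t))^e * Real.exp (t*b) := by
      rw [one_div, Real.inv_rpow (by positivity), Real.mul_rpow (by norm_num) ht0.le,
        Real.rpow_neg (by norm_num), mul_comm b t, div_eq_mul_inv, mul_inv]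
      ring
    rw [heq]
    exact mul_le_mul_of_nonneg_right h3t (Real.exp_pos _).le
  have hG : Tendsto G atBot atTop := by
    refine (hH2.comp tendsto_neg_atBot_atTop).congr' ?_
    filter_upwards [eventually_le_atBot (0:ℝ)] with u hu
    simp only [Function.comp, hGdef, abs_of_nonpos hu]
  have hmain : Tendsto (fun s : ℝ => envA 1 0 s ^ e * ‖sigmaMat ν₁ ν₂ 1 0 s‖)
      (Filter.comap (fun s : ℝ => Real.sign ν₁ * s) atBot) atTop :=
    tendsto_atTop_mono hGF (hG.comp tendsto_comap)
  have hsurj : Function.Surjective (fun s : ℝ => Real.sign ν₁ * s) := by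
    intro y
    have hs0 : Real.sign ν₁ ≠ 0 := fun h => hν₁ (Real.sign_eq_zero_iff.mp h)
    exact ⟨(Real.sign ν₁)⁻¹ * y, by field_simp⟩
  haveI : (Filter.comap (fun s : ℝ => Real.sign ν₁ * s) atBot).NeBot :=
    Filter.comap_neBot fun t ht => by
      obtain ⟨x, hx⟩ := Filter.nonempty_of_mem ht
      obtain ⟨a, ha⟩ := hsurj x
      have ha' : Real.sign ν₁ * a = x := ha
      exact ⟨a, ha' ▸ hx⟩
  refine ⟨hmain, ?_⟩
  rintro ⟨C, hC⟩
  obtain ⟨s, hs⟩ := (hmain.eventually_gt_atTop C).exists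
  exact absurd (hC 1 0 s one_ne_zero) (not_le.mpr hs)

end
end
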